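/- arXiv:2206.03114 — 2 statements merged into one kernel-verified Lean document; each statement's English description precedes it below -/
import Mathlib

section
/- Let G be a connected k-uniform hypergraph, let r ≥ 1, and let G' be the hypergraph obtained from G by moving edges (e_1,…,e_r) from (v_1,…,v_r) to a vertex u. Let 0 ≤ α < 1 and let x be the α-Perron vector of G. If x_u ≥ max_{1≤i≤r} x_{v_i}, then ρ_α(G') > ρ_α(G). -/
/-!
`ρ_α(G)` is the maximum of the form `P(x) = Σ_e (α Σ_{v∈e} x_v^k + (1-α) k Π_{v∈e} x_v)` over
nonnegative `x` with `Σ_v x_v^k = 1`, and `P` is homogeneous of degree `k`. Hence at the positive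
maximizer `x` the function `s ↦ P(x[u ↦ s]) - ρ_α(G) (s^k + Σ_{w ≠ u} x_w^k)` has a local
maximum at `s = x_u`, and its derivative vanishes there: this is the eigen-equation at `u`.

Since `x_u ≥ x_{v_i}`, moving the edges does not decrease `P` at `x`. So if `ρ_α(G') ≤ ρ_α(G)`,
the vector `x` also maximizes the form of `G'`, and subtracting the eigen-equations of `G` and
`G'` at `u` gives
`(ρ_α(G') - ρ_α(G)) k x_u^{k-1} = Σ_i (α k x_u^{k-1} + (1-α) k Π_{w ∈ e_i ∖ v_i} x_w) > 0`.
-/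

/-- A (finite) hypergraph on vertex type `V`: a finite set of edges, each a finite
set of vertices.  For the results below the vertex set is the whole type `V`. -/
structure FinHypergraph (V : Type*) where
  edges : Finset (Finset V)

namespace FinHypergraph

variable {V W : Type*}

/-- `G` is `k`-uniform: every edge has exactly `k` vertices. -/
def Uniform (G : FinHypergraph V) (k : ℕ) : Prop := ∀ e ∈ G.edges, e.card = k

/-- The degree of a vertex: the number of edges containing it. -/
def degree [DecidableEq V] (G : FinHypergraph V) (v : V) : ℕ :=
  (G.edges.filter fun e => v ∈ e).card

/-- A walk of length `l` from `u` to `v`: vertices `vs 0 = u, …, vs l = v` and edges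
`es 0, …, es (l-1)` with consecutive vertices lying in the corresponding edge. -/
def Walk (G : FinHypergraph V) (u v : V) (l : ℕ) : Prop :=
  ∃ (vs : Fin (l + 1) → V) (es : Fin l → Finset V),
    vs 0 = u ∧ vs (Fin.last l) = v ∧
    ∀ i : Fin l, es i ∈ G.edges ∧ vs i.castSucc ∈ es i ∧ vs i.succ ∈ es i

/-- `G` is connected: any two vertices are joined by a walk (equivalently, a path). -/
def Connected (G : FinHypergraph V) : Prop := ∀ u v : V, ∃ l, G.Walk u v l

/-- The distance between two vertices: the minimum length of a walk joining them. -/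
noncomputable def hdist (G : FinHypergraph V) (u v : V) : ℕ := sInf {l | G.Walk u v l}

/-- `G` has a cycle: distinct vertices `v_1, …, v_l` and distinct edges `e_1, …, e_l`
(`l ≥ 2`) with `{v_i, v_{i+1}} ⊆ e_i` (indices mod `l`). -/
def HasCycle (G : FinHypergraph V) : Prop :=
  ∃ (l : ℕ) (hl : 2 ≤ l) (vs : Fin l → V) (es : Fin l → Finset V),
    Function.Injective vs ∧ Function.Injective es ∧
    (∀ i, es i ∈ G.edges) ∧
    ∀ i : Fin l, vs i ∈ es i ∧ vs ⟨((i : ℕ) + 1) % l, Nat.mod_lt _ (by omega)⟩ ∈ es i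

/-- A `k`-uniform supertree: a `k`-uniform hypergraph that is connected and acyclic. -/
def IsSupertree (G : FinHypergraph V) (k : ℕ) : Prop :=
  G.Uniform k ∧ G.Connected ∧ ¬ G.HasCycle

/-- `e` is a pendent edge of `G`: one of its vertices has degree at least `2` and all
its other vertices have degree `1`. -/
def IsPendentEdge [DecidableEq V] (G : FinHypergraph V) (e : Finset V) : Prop :=
  e ∈ G.edges ∧ ∃ v ∈ e, 2 ≤ G.degree v ∧ ∀ w ∈ e, w ≠ v → G.degree w = 1

/-- `S` is an independent set: no two of its vertices lie in a common edge. -/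
def IsIndep (G : FinHypergraph V) (S : Finset V) : Prop :=
  ∀ u ∈ S, ∀ v ∈ S, u ≠ v → ∀ e ∈ G.edges, ¬ (u ∈ e ∧ v ∈ e)

/-- The independence number: the maximum size of an independent set. -/
noncomputable def indepNum (G : FinHypergraph V) : ℕ :=
  sSup {n | ∃ S : Finset V, G.IsIndep S ∧ S.card = n}

/-- `M` is a matching: a set of pairwise disjoint edges of `G`. -/
def IsMatching [DecidableEq V] (G : FinHypergraph V) (M : Finset (Finset V)) : Prop :=
  M ⊆ G.edges ∧ ∀ e ∈ M, ∀ f ∈ M, e ≠ f → e ∩ f = ∅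

/-- The matching number: the maximum size of a matching. -/
noncomputable def matchNum [DecidableEq V] (G : FinHypergraph V) : ℕ :=
  sSup {n | ∃ M : Finset (Finset V), G.IsMatching M ∧ M.card = n}

/-- The `α`-spectral radius of a (connected) `k`-uniform hypergraph:
`ρ_α(G) = max { Σ_{e∈E} ( α Σ_{v∈e} x_v^k + (1-α) k Π_{v∈e} x_v ) :
x ≥ 0, Σ_v x_v^k = 1 }`. -/
noncomputable def aspec [Fintype V] (G : FinHypergraph V) (k : ℕ) (α : ℝ) : ℝ :=
  sSup {r : ℝ | ∃ x : V → ℝ, (∀ v, 0 ≤ x v) ∧ (∑ v, x v ^ k) = 1 ∧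
    r = ∑ e ∈ G.edges, (α * ∑ v ∈ e, x v ^ k + (1 - α) * (k : ℝ) * ∏ v ∈ e, x v)}

/-- `x` is the `α`-Perron vector of `G`: the positive unit maximizer in the
variational characterization of `ρ_α(G)`. -/
def IsPerron [Fintype V] (G : FinHypergraph V) (k : ℕ) (α : ℝ) (x : V → ℝ) : Prop :=
  (∀ v, 0 < x v) ∧ (∑ v, x v ^ k) = 1 ∧
  (∑ e ∈ G.edges, (α * ∑ v ∈ e, x v ^ k + (1 - α) * (k : ℝ) * ∏ v ∈ e, x v)) =
    G.aspec k α

/-- The multiset of vertex degrees of `G` (the degree sequence up to ordering). -/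
noncomputable def degreeMultiset [Fintype V] [DecidableEq V] (G : FinHypergraph V) :
    Multiset ℕ :=
  (Finset.univ : Finset V).val.map G.degree

/-- Isomorphism of hypergraphs: a bijection of the vertex sets carrying edges to
edges. -/
def Iso [DecidableEq W] (G : FinHypergraph V) (H : FinHypergraph W) : Prop :=
  ∃ φ : V ≃ W, ∀ e : Finset V, e ∈ G.edges ↔ e.image φ ∈ H.edges

end FinHypergraph

namespace FinHypergraph

variable {V : Type*}

noncomputable def edgeTerm (k : ℕ) (α : ℝ) (f : Finset V) (x : V → ℝ) : ℝ :=
  α * ∑ v ∈ f, x v ^ k + (1 - α) * k * ∏ v ∈ f, x v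

noncomputable def aform (G : FinHypergraph V) (k : ℕ) (α : ℝ) (x : V → ℝ) : ℝ :=
  ∑ f ∈ G.edges, edgeTerm k α f x

variable {k : ℕ} {α : ℝ}

theorem aform_smul {G : FinHypergraph V} (hG : G.Uniform k) (c : ℝ) (x : V → ℝ) :
    G.aform k α (c • x) = c ^ k * G.aform k α x := by
  unfold aform edgeTerm
  rw [Finset.mul_sum]
  refine Finset.sum_congr rfl fun f hf => ?_
  simp only [Pi.smul_apply, smul_eq_mul, mul_pow, ← Finset.mul_sum, Finset.prod_mul_distrib,
    Finset.prod_const, hG f hf]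
  ring

section Variational

variable [Fintype V]

theorem edgeTerm_le_of_sum_pow_eq_one (hk : k ≠ 0) (f : Finset V) {x : V → ℝ}
    (hx : ∀ v, 0 ≤ x v) (hx1 : ∑ v, x v ^ k = 1) :
    edgeTerm k α f x ≤ |α| + |(1 - α) * k| := by
  have hsum : ∑ v ∈ f, x v ^ k ≤ 1 :=
    hx1 ▸ Finset.sum_le_sum_of_subset_of_nonneg (Finset.subset_univ f)
      fun w _ _ => pow_nonneg (hx w) k
  have hle_one : ∀ v, x v ≤ 1 := fun v =>
    (pow_le_one_iff_of_nonneg (hx v) hk).mp <|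
      hx1 ▸ Finset.single_le_sum (fun w _ => pow_nonneg (hx w) k) (Finset.mem_univ v)
  have hprod : ∏ v ∈ f, x v ≤ 1 := Finset.prod_le_one (fun v _ => hx v) fun v _ => hle_one v
  have hsum0 : 0 ≤ ∑ v ∈ f, x v ^ k := Finset.sum_nonneg fun v _ => pow_nonneg (hx v) k
  have hprod0 : 0 ≤ ∏ v ∈ f, x v := Finset.prod_nonneg fun v _ => hx v
  calc edgeTerm k α f x
      ≤ |α| * ∑ v ∈ f, x v ^ k + |(1 - α) * k| * ∏ v ∈ f, x v := by
        unfold edgeTerm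
        gcongr <;> exact le_abs_self _
    _ ≤ |α| + |(1 - α) * k| := by
        gcongr
        · exact mul_le_of_le_one_right (abs_nonneg _) hsum
        · exact mul_le_of_le_one_right (abs_nonneg _) hprod

theorem bddAbove_aform (G : FinHypergraph V) (hk : k ≠ 0) :
    BddAbove {r | ∃ x : V → ℝ, (∀ v, 0 ≤ x v) ∧ ∑ v, x v ^ k = 1 ∧ r = G.aform k α x} := by
  refine ⟨G.edges.card * (|α| + |(1 - α) * k|), ?_⟩
  rintro r ⟨x, hx, hx1, rfl⟩
  calc G.aform k α x ≤ ∑ _f ∈ G.edges, (|α| + |(1 - α) * k|) :=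
        Finset.sum_le_sum fun f _ => edgeTerm_le_of_sum_pow_eq_one hk f hx hx1
    _ = G.edges.card * (|α| + |(1 - α) * k|) := by rw [Finset.sum_const, nsmul_eq_mul]

theorem aform_le_mul_aspec {G : FinHypergraph V} (hk : k ≠ 0) (hG : G.Uniform k)
    {x : V → ℝ} (hx : ∀ v, 0 ≤ x v) (hpos : 0 < ∑ v, x v ^ k) :
    G.aform k α x ≤ (∑ v, x v ^ k) * G.aspec k α := by
  set N := ∑ v, x v ^ k
  set c : ℝ := N⁻¹ ^ (k : ℝ)⁻¹
  have hc0 : 0 ≤ c := Real.rpow_nonneg (inv_nonneg.mpr hpos.le) _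
  have hck : c ^ k = N⁻¹ := Real.rpow_inv_natCast_pow (inv_nonneg.mpr hpos.le) hk
  have hunit : ∑ v, (c • x) v ^ k = 1 := by
    simp only [Pi.smul_apply, smul_eq_mul, mul_pow, ← Finset.mul_sum, hck]
    exact inv_mul_cancel₀ hpos.ne'
  have hle : N⁻¹ * G.aform k α x ≤ G.aspec k α := by
    rw [← hck, ← aform_smul hG]
    exact le_csSup (G.bddAbove_aform hk)
      ⟨c • x, fun v => mul_nonneg hc0 (hx v), hunit, rfl⟩
  calc G.aform k α x = N * (N⁻¹ * G.aform k α x) := by field_simp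
    _ ≤ N * G.aspec k α := mul_le_mul_of_nonneg_left hle hpos.le

end Variational

section Update

variable [DecidableEq V]

theorem differentiable_update_apply (x : V → ℝ) (u v : V) :
    Differentiable ℝ fun s : ℝ => Function.update x u s v := by
  by_cases h : v = u
  · subst h
    simpa only [Function.update_self] using differentiable_fun_id
  · simpa only [Function.update_of_ne h] using differentiable_const (x v)

theorem differentiable_aform_update (G : FinHypergraph V) (k : ℕ) (α : ℝ) (x : V → ℝ)
    (u : V) : Differentiable ℝ fun s => G.aform k α (Function.update x u s) := by
  have := differentiable_update_apply x u
  unfold aform edgeTerm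
  fun_prop

theorem sum_update_pow [Fintype V] (x : V → ℝ) (u : V) (s : ℝ) (k : ℕ) :
    ∑ w, Function.update x u s w ^ k = s ^ k + ∑ w ∈ Finset.univ.erase u, x w ^ k := by
  rw [← Finset.add_sum_erase _ _ (Finset.mem_univ u), Function.update_self]
  congr 1
  exact Finset.sum_congr rfl fun w hw => by rw [Function.update_of_ne (Finset.ne_of_mem_erase hw)]

/-- The eigen-equation of `A_α(G)` at `u`, in derivative form. -/
theorem eq_aspec_mul_of_hasDerivAt [Fintype V] {G : FinHypergraph V} (hk : k ≠ 0)
    (hG : G.Uniform k) {x : V → ℝ} {u : V} (hx : ∀ v, 0 ≤ x v) (hxu : 0 < x u)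
    (hx1 : ∑ v, x v ^ k = 1) (hmax : G.aspec k α ≤ G.aform k α x) {D : ℝ}
    (hD : HasDerivAt (fun s => G.aform k α (Function.update x u s)) D (x u)) :
    D = G.aspec k α * (k * x u ^ (k - 1)) := by
  set ρ := G.aspec k α
  set R := ∑ w ∈ Finset.univ.erase u, x w ^ k
  have hR : 0 ≤ R := Finset.sum_nonneg fun w _ => pow_nonneg (hx w) k
  let g : ℝ → ℝ := fun s => G.aform k α (Function.update x u s) - ρ * (s ^ k + R)
  have hmax_g : IsLocalMax g (x u) := by
    filter_upwards [eventually_gt_nhds hxu] with s hs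
    have hupd : ∀ w, 0 ≤ Function.update x u s w := fun w => by
      rcases eq_or_ne w u with rfl | h
      · simpa only [Function.update_self] using hs.le
      · simpa only [Function.update_of_ne h] using hx w
    have hle := aform_le_mul_aspec (α := α) hk hG hupd
      (by rw [sum_update_pow]; exact add_pos_of_pos_of_nonneg (pow_pos hs k) hR)
    have hxR : x u ^ k + R = 1 :=
      hx1 ▸ Finset.add_sum_erase _ (fun w => x w ^ k) (Finset.mem_univ u)
    simp only [g, Function.update_eq_self, hxR]
    rw [sum_update_pow] at hle
    linarith
  have hg : HasDerivAt g (D - ρ * (k * x u ^ (k - 1))) (x u) := by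
    have := ((hasDerivAt_pow k (x u)).add_const R).const_mul ρ
    exact hD.sub (by simpa only [Nat.cast_id] using this)
  linarith [hmax_g.hasDerivAt_eq_zero hg]

theorem edgeTerm_update_of_notMem {u : V} {f : Finset V} (hu : u ∉ f) (x : V → ℝ) (s : ℝ) :
    edgeTerm k α f (Function.update x u s) = edgeTerm k α f x := by
  have h : ∀ w ∈ f, Function.update x u s w = x w := fun w hw =>
    Function.update_of_ne (ne_of_mem_of_not_mem hw hu) _ _
  unfold edgeTerm
  rw [Finset.sum_congr rfl fun w hw => by rw [h w hw],
    Finset.prod_congr rfl fun w hw => by rw [h w hw]]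

theorem edgeTerm_insert {u : V} {D : Finset V} (hu : u ∉ D) (x : V → ℝ) :
    edgeTerm k α (insert u D) x =
      α * (x u ^ k + ∑ w ∈ D, x w ^ k) + (1 - α) * k * (x u * ∏ w ∈ D, x w) := by
  rw [edgeTerm, Finset.sum_insert hu, Finset.prod_insert hu]

theorem edgeTerm_insert_update {u : V} {D : Finset V} (hu : u ∉ D) (x : V → ℝ) (s : ℝ) :
    edgeTerm k α (insert u D) (Function.update x u s) =
      α * (s ^ k + ∑ w ∈ D, x w ^ k) + (1 - α) * k * (s * ∏ w ∈ D, x w) := by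
  have h : ∀ w ∈ D, Function.update x u s w = x w := fun w hw =>
    Function.update_of_ne (ne_of_mem_of_not_mem hw hu) _ _
  rw [edgeTerm_insert hu, Function.update_self, Finset.sum_congr rfl fun w hw => by rw [h w hw],
    Finset.prod_congr rfl fun w hw => by rw [h w hw]]

theorem edgeTerm_insert_le_insert (hα0 : 0 ≤ α) (hα1 : α ≤ 1) {a b : V} {D : Finset V}
    (ha : a ∉ D) (hb : b ∉ D) {x : V → ℝ} (hx : ∀ v, 0 ≤ x v) (hab : x a ≤ x b) :
    edgeTerm k α (insert a D) x ≤ edgeTerm k α (insert b D) x := by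
  rw [edgeTerm_insert ha, edgeTerm_insert hb]
  have hpow : x a ^ k ≤ x b ^ k := pow_le_pow_left₀ (hx a) hab k
  have hprod : 0 ≤ ∏ w ∈ D, x w := Finset.prod_nonneg fun w _ => hx w
  gcongr

structure IsEdgeMove (G G' : FinHypergraph V) (u : V) {r : ℕ} (v : Fin r → V)
    (e : Fin r → Finset V) : Prop where
  mem_edges : ∀ i, e i ∈ G.edges
  injective : Function.Injective e
  notMem : ∀ i, u ∉ e i
  mem : ∀ i, v i ∈ e i
  injective_moved : Function.Injective fun i => insert u ((e i).erase (v i))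
  moved_notMem : ∀ i, insert u ((e i).erase (v i)) ∉ G.edges
  edges_eq : G'.edges = (G.edges \ Finset.image e Finset.univ) ∪
    Finset.image (fun i => insert u ((e i).erase (v i))) Finset.univ

namespace IsEdgeMove

variable {G G' : FinHypergraph V} {u : V} {r : ℕ} {v : Fin r → V} {e : Fin r → Finset V}

theorem notMem_erase (hm : IsEdgeMove G G' u v e) (i : Fin r) : u ∉ (e i).erase (v i) :=
  fun h => hm.notMem i (Finset.mem_of_mem_erase h)

theorem sum_edges (hm : IsEdgeMove G G' u v e) (F : Finset V → ℝ) :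
    ∑ f ∈ G'.edges, F f =
      ∑ f ∈ G.edges, F f + ∑ i, (F (insert u ((e i).erase (v i))) - F (e i)) := by
  have hsub : Finset.image e Finset.univ ⊆ G.edges := by
    simpa only [Finset.image_subset_iff, Finset.mem_univ, forall_const] using hm.mem_edges
  have hdisj : Disjoint (G.edges \ Finset.image e Finset.univ)
      (Finset.image (fun i => insert u ((e i).erase (v i))) Finset.univ) := by
    rw [Finset.disjoint_right]
    rintro f hf hf'
    obtain ⟨i, -, rfl⟩ := Finset.mem_image.mp hf
    exact hm.moved_notMem i (Finset.mem_sdiff.mp hf').1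
  rw [hm.edges_eq, Finset.sum_union hdisj, Finset.sum_sdiff_eq_sub hsub,
    Finset.sum_image fun _ _ _ _ h => hm.injective h,
    Finset.sum_image fun _ _ _ _ h => hm.injective_moved h, Finset.sum_sub_distrib]
  ring

theorem uniform (hm : IsEdgeMove G G' u v e) (hG : G.Uniform k) : G'.Uniform k := by
  intro f hf
  rw [hm.edges_eq] at hf
  rcases Finset.mem_union.mp hf with h | h
  · exact hG f (Finset.mem_sdiff.mp h).1
  · obtain ⟨i, -, rfl⟩ := Finset.mem_image.mp h
    rw [Finset.card_insert_of_notMem (hm.notMem_erase i),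
      Finset.card_erase_add_one (hm.mem i), hG _ (hm.mem_edges i)]

theorem aform_le (hm : IsEdgeMove G G' u v e) (hα0 : 0 ≤ α) (hα1 : α ≤ 1) {x : V → ℝ}
    (hx : ∀ v, 0 ≤ x v) (hxu : ∀ i, x (v i) ≤ x u) : G.aform k α x ≤ G'.aform k α x := by
  rw [aform, aform, hm.sum_edges, le_add_iff_nonneg_right]
  refine Finset.sum_nonneg fun i _ => sub_nonneg.mpr ?_
  conv_lhs => rw [← Finset.insert_erase (hm.mem i)]
  exact edgeTerm_insert_le_insert hα0 hα1 (Finset.notMem_erase _ _) (hm.notMem_erase i) hx (hxu i)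

/-- Each moved edge contributes the derivative of `α s^k + (1-α) k s Π_{w ∈ e_i \ v_i} x_w`. -/
theorem hasDerivAt_aform_update (hm : IsEdgeMove G G' u v e) {x : V → ℝ} {t D : ℝ}
    (hD : HasDerivAt (fun s => G.aform k α (Function.update x u s)) D t) :
    HasDerivAt (fun s => G'.aform k α (Function.update x u s))
      (D + ∑ i, (α * (k * t ^ (k - 1)) + (1 - α) * k * ∏ w ∈ (e i).erase (v i), x w)) t := by
  have hmoved : ∀ i, HasDerivAt
      (fun s => edgeTerm k α (insert u ((e i).erase (v i))) (Function.update x u s)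
        - edgeTerm k α (e i) (Function.update x u s))
      (α * (k * t ^ (k - 1)) + (1 - α) * k * ∏ w ∈ (e i).erase (v i), x w) t := by
    intro i
    simp only [edgeTerm_insert_update (hm.notMem_erase i),
      edgeTerm_update_of_notMem (hm.notMem i)]
    have := ((((hasDerivAt_pow k t).add_const (∑ w ∈ (e i).erase (v i), x w ^ k)).const_mul α).add
      (((hasDerivAt_id t).mul_const (∏ w ∈ (e i).erase (v i), x w)).const_mul
        ((1 - α) * k))).sub_const (edgeTerm k α (e i) x)
    simpa only [Pi.add_apply, Nat.cast_id, id, one_mul] using this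
  simp only [aform, hm.sum_edges]
  exact hD.add (HasDerivAt.fun_sum fun i _ => hmoved i)

end IsEdgeMove

end Update

end FinHypergraph

theorem aspec_lt_of_edge_moving_general (k : ℕ) (hk : 2 ≤ k)
    {V : Type} [Fintype V] [DecidableEq V] (G G' : FinHypergraph V)
    (hGu : G.Uniform k)
    (r : ℕ) (hr : 1 ≤ r) (u : V) (v : Fin r → V) (e : Fin r → Finset V)
    (he : ∀ i, e i ∈ G.edges) (heinj : Function.Injective e)
    (hue : ∀ i, u ∉ e i) (hve : ∀ i, v i ∈ e i)
    (he'inj : Function.Injective fun i => insert u ((e i).erase (v i)))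
    (he'new : ∀ i, insert u ((e i).erase (v i)) ∉ G.edges)
    (hG' : G'.edges =
      (G.edges \ Finset.image e Finset.univ) ∪
        Finset.image (fun i => insert u ((e i).erase (v i))) Finset.univ)
    (α : ℝ) (hα0 : 0 ≤ α) (hα1 : α < 1)
    (x : V → ℝ) (hx : G.IsPerron k α x)
    (hxu : ∀ i, x (v i) ≤ x u) :
    G.aspec k α < G'.aspec k α := by
  obtain ⟨hxpos, hx1, hxmax⟩ := hx
  have hm : G.IsEdgeMove G' u v e := ⟨he, heinj, hue, hve, he'inj, he'new, hG'⟩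
  have hk0 : k ≠ 0 := by omega
  have hx0 : ∀ w, 0 ≤ x w := fun w => (hxpos w).le
  by_contra! hle
  have hmaxG' : G'.aspec k α ≤ G'.aform k α x :=
    hle.trans (hxmax ▸ hm.aform_le hα0 hα1.le hx0 hxu)
  have hD := (G.differentiable_aform_update k α x u (x u)).hasDerivAt
  have hρ := FinHypergraph.eq_aspec_mul_of_hasDerivAt hk0 hGu hx0 (hxpos u) hx1 hxmax.ge hD
  have hρ' := FinHypergraph.eq_aspec_mul_of_hasDerivAt hk0 (hm.uniform hGu) hx0 (hxpos u) hx1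
    hmaxG' (hm.hasDerivAt_aform_update hD)
  have hxu0 := hxpos u
  have hgain : 0 < ∑ i, (α * (k * x u ^ (k - 1)) +
      (1 - α) * k * ∏ w ∈ (e i).erase (v i), x w) := by
    refine Finset.sum_pos (fun i _ => ?_) ⟨⟨0, hr⟩, Finset.mem_univ _⟩
    have hprod : 0 < ∏ w ∈ (e i).erase (v i), x w := Finset.prod_pos fun w _ => hxpos w
    have hα1' : 0 < 1 - α := sub_pos.mpr hα1
    positivity
  have hc : 0 < (k : ℝ) * x u ^ (k - 1) := by positivity
  linarith [mul_le_mul_of_nonneg_right hle hc.le]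

/-- edge-moving lemma: if `G'` is obtained from the connected
`k`-uniform hypergraph `G` by moving edges `(e_1,…,e_r)` from `(v_1,…,v_r)` to `u`
and the `α`-Perron vector `x` of `G` satisfies `x_u ≥ max_i x_{v_i}`, then
`ρ_α(G') > ρ_α(G)`. -/
theorem aspec_lt_of_edge_moving (k : ℕ) (hk : 2 ≤ k)
    {V : Type} [Fintype V] [DecidableEq V] (G G' : FinHypergraph V)
    (hGu : G.Uniform k) (hGc : G.Connected)
    (r : ℕ) (hr : 1 ≤ r) (u : V) (v : Fin r → V) (e : Fin r → Finset V)
    (he : ∀ i, e i ∈ G.edges) (heinj : Function.Injective e)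
    (hue : ∀ i, u ∉ e i) (hve : ∀ i, v i ∈ e i)
    (he'inj : Function.Injective fun i => insert u ((e i).erase (v i)))
    (he'new : ∀ i, insert u ((e i).erase (v i)) ∉ G.edges)
    (hG' : G'.edges =
      (G.edges \ Finset.image e Finset.univ) ∪
        Finset.image (fun i => insert u ((e i).erase (v i))) Finset.univ)
    (α : ℝ) (hα0 : 0 ≤ α) (hα1 : α < 1)
    (x : V → ℝ) (hx : G.IsPerron k α x)
    (hxu : ∀ i, x (v i) ≤ x u) :
    G.aspec k α < G'.aspec k α :=
  aspec_lt_of_edge_moving_general k hk G G' hGu r hr u v e he heinj hue hve he'inj he'new hG' α hα0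
    hα1 x hx hxu
end

section
/- Every k-uniform supertree G has a maximum independent set S such that for each pendent edge of G, S contains a pendent vertex of that edge. -/
/-! A maximum independent set with as many pendent vertices as possible already has the
property. If it had no pendent vertex in a pendent edge `e`, it would meet `e` at most in the
centre of `e`; discarding `e` from it and adding a pendent vertex `w` of `e` keeps it independent,
since `w` lies in no other edge, and does not lose size, but gains a pendent vertex. -/

namespace FinHypergraph

variable {V : Type*} (G : FinHypergraph V)

theorem eq_of_degree_eq_one [DecidableEq V] {w : V} (hw : G.degree w = 1) {e f : Finset V}
    (he : e ∈ G.edges) (hwe : w ∈ e) (hf : f ∈ G.edges) (hwf : w ∈ f) : e = f :=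
  Finset.card_le_one.mp hw.le e (Finset.mem_filter.mpr ⟨he, hwe⟩) f
    (Finset.mem_filter.mpr ⟨hf, hwf⟩)

variable {G}

theorem IsIndep.insert_sdiff [DecidableEq V] {S e : Finset V} {w : V} (hS : G.IsIndep S)
    (hw : G.degree w = 1) (he : e ∈ G.edges) (hwe : w ∈ e) :
    G.IsIndep (insert w (S \ e)) := by
  have away : ∀ a ∈ S \ e, ∀ f ∈ G.edges, w ∈ f → a ∉ f := fun a ha f hf hwf haf =>
    (Finset.mem_sdiff.mp ha).2 (G.eq_of_degree_eq_one hw he hwe hf hwf ▸ haf)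
  intro a ha b hb hab f hf ⟨haf, hbf⟩
  rcases Finset.mem_insert.mp ha with rfl | haS <;> rcases Finset.mem_insert.mp hb with rfl | hbS
  · exact hab rfl
  · exact away b hbS f hf haf hbf
  · exact away a haS f hf hbf haf
  · exact hS a (Finset.mem_sdiff.mp haS).1 b (Finset.mem_sdiff.mp hbS).1 hab f hf ⟨haf, hbf⟩

variable [Fintype V]

theorem bddAbove_indepCards : BddAbove {n | ∃ S : Finset V, G.IsIndep S ∧ S.card = n} :=
  ⟨Fintype.card V, by rintro n ⟨S, -, rfl⟩; exact S.card_le_univ⟩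

theorem IsIndep.card_le_indepNum {S : Finset V} (hS : G.IsIndep S) : S.card ≤ G.indepNum :=
  le_csSup bddAbove_indepCards ⟨S, hS, rfl⟩

theorem exists_isIndep_card_eq_indepNum : ∃ S : Finset V, G.IsIndep S ∧ S.card = G.indepNum :=
  Nat.sSup_mem (s := {n | ∃ S : Finset V, G.IsIndep S ∧ S.card = n}) ⟨0, ∅, by simp [IsIndep]⟩
    bddAbove_indepCards

variable (G) in
theorem exists_maxIndep_maximizing (f : Finset V → ℕ) :
    ∃ S : Finset V, G.IsIndep S ∧ S.card = G.indepNum ∧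
      ∀ T : Finset V, G.IsIndep T → T.card = G.indepNum → f T ≤ f S := by
  classical
  obtain ⟨S₀, hS₀⟩ := G.exists_isIndep_card_eq_indepNum
  obtain ⟨S, hS, hmax⟩ := (Finset.univ.filter fun S : Finset V =>
    G.IsIndep S ∧ S.card = G.indepNum).exists_max_image f ⟨S₀, by simpa using hS₀⟩
  simp only [Finset.mem_filter, Finset.mem_univ, true_and] at hS hmax
  exact ⟨S, hS.1, hS.2, fun T hT hTcard => hmax T ⟨hT, hTcard⟩⟩

theorem exists_degree_eq_one_mem_of_isPendentEdge [DecidableEq V] {S e : Finset V}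
    (hS : G.IsIndep S) (hcard : S.card = G.indepNum)
    (hmax : ∀ T : Finset V, G.IsIndep T → T.card = G.indepNum →
      (T.filter (G.degree · = 1)).card ≤ (S.filter (G.degree · = 1)).card)
    (he : G.IsPendentEdge e) (he2 : 2 ≤ e.card) : ∃ v ∈ S, v ∈ e ∧ G.degree v = 1 := by
  by_contra! hnone
  obtain ⟨heG, v, hve, -, hrest⟩ := he
  obtain ⟨w, hwe, hwv⟩ := Finset.exists_mem_ne he2 v
  have hw : G.degree w = 1 := hrest w hwe hwv
  have hwS : w ∉ S := fun h => hnone w h hwe hw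
  have hinter : (S ∩ e).card ≤ 1 := by
    refine (Finset.card_le_card fun u hu => ?_).trans (Finset.card_singleton v).le
    obtain ⟨huS, hue⟩ := Finset.mem_inter.mp hu
    by_contra huv
    exact hnone u huS hue (hrest u hue (by simpa using huv))
  set T := insert w (S \ e)
  have hT : G.IsIndep T := hS.insert_sdiff hw heG hwe
  have hTcard : T.card = G.indepNum := by
    have hsplit := Finset.card_sdiff_add_card_inter S e
    have hle := hT.card_le_indepNum
    rw [Finset.card_insert_of_notMem fun h => hwS (Finset.mem_sdiff.mp h).1] at hle ⊢
    omega
  have hfilter : T.filter (G.degree · = 1) = insert w (S.filter (G.degree · = 1)) := by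
    rw [Finset.filter_insert, if_pos hw]
    congr 1
    ext u
    simp only [Finset.mem_filter, Finset.mem_sdiff]
    exact ⟨fun h => ⟨h.1.1, h.2⟩, fun h => ⟨⟨h.1, fun hue => hnone u h.1 hue h.2⟩, h.2⟩⟩
  have hgain := hmax T hT hTcard
  rw [hfilter, Finset.card_insert_of_notMem fun h => hwS (Finset.mem_filter.mp h).1] at hgain
  omega

end FinHypergraph

/-- every `k`-uniform supertree has a maximum independent set
containing a pendent vertex of each pendent edge. -/
theorem exists_maxIndep_with_pendent_vertices (k : ℕ) (hk : 2 ≤ k)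
    {V : Type} [Fintype V] [DecidableEq V] (G : FinHypergraph V)
    (hG : G.IsSupertree k) :
    ∃ S : Finset V, G.IsIndep S ∧ S.card = G.indepNum ∧
      ∀ e : Finset V, G.IsPendentEdge e → ∃ v ∈ S, v ∈ e ∧ G.degree v = 1 := by
  obtain ⟨S, hS, hcard, hmax⟩ :=
    G.exists_maxIndep_maximizing fun S => (S.filter (G.degree · = 1)).card
  exact ⟨S, hS, hcard, fun e he =>
    FinHypergraph.exists_degree_eq_one_mem_of_isPendentEdge hS hcard hmax he (hG.1 e he.1 ▸ hk)⟩
end
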